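/- Let φ_x(t) = ((1+x)² − 4t)^{−1/2} · (1_{[0,x)}(t) + 2·1_{[x,b_x)}(t)) with b_x = ((1+x)/2)², let r(t) = (1/2)·1_{[0,1/4)}(t), and let r*(t) = (1/(2√(1−t)))·1_{[0,1/4)}(t). Then φ_x(t) ≥ r*(t) ≥ r(t) for all x ∈ [0,1] and all t ∈ [0,1]. -/
import Mathlib


open MeasureTheory

/-- The density `φ_x(t) = ((1+x)² − 4t)^{−1/2} · (1_{[0,x)}(t) + 2·1_{[x,b_x)}(t))`
with `b_x = ((1+x)/2)²`. -/
noncomputable def phi (x t : ℝ) : ℝ :=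
  ((1 + x) ^ 2 - 4 * t) ^ (-(1:ℝ) / 2) *
    (Set.indicator (Set.Ico (0:ℝ) x) 1 t
      + 2 * Set.indicator (Set.Ico x (((1 + x) / 2) ^ 2)) 1 t)

/-- `r(t) = (1/2)·1_{[0,1/4)}(t)`. -/
noncomputable def r (t : ℝ) : ℝ := (1 / 2) * Set.indicator (Set.Ico (0:ℝ) (1 / 4)) 1 t

/-- `r*(t) = (1/(2√(1−t)))·1_{[0,1/4)}(t)`. -/
noncomputable def rStar (t : ℝ) : ℝ :=
  (1 / (2 * Real.sqrt (1 - t))) * Set.indicator (Set.Ico (0:ℝ) (1 / 4)) 1 t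

/-- `φ_x(t) ≥ r*(t) ≥ r(t)` for all `x ∈ [0,1]` and all `t ∈ [0,1]`. -/
theorem phi_ge_rStar_ge_r (x : ℝ) (hx : x ∈ Set.Icc (0:ℝ) 1)
    (t : ℝ) (ht : t ∈ Set.Icc (0:ℝ) 1) :
    rStar t ≤ phi x t ∧ r t ≤ rStar t := by
  obtain ⟨hx0, hx1⟩ := hx
  obtain ⟨ht0, ht1⟩ := ht
  by_cases h : t < 1/4
  · have hmem : t ∈ Set.Ico (0:ℝ) (1/4) := ⟨ht0, h⟩
    have hz : (0:ℝ) < (1 + x) ^ 2 - 4 * t := by nlinarith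
    have h1t : (0:ℝ) < 1 - t := by linarith
    have hs : (0:ℝ) < Real.sqrt (1 - t) := Real.sqrt_pos.2 h1t
    have hsz : (0:ℝ) < Real.sqrt ((1 + x) ^ 2 - 4 * t) := Real.sqrt_pos.2 hz
    have hzpow : ((1 + x) ^ 2 - 4 * t) ^ (-(1:ℝ)/2)
        = 1 / Real.sqrt ((1 + x) ^ 2 - 4 * t) := by
      rw [show (-(1:ℝ))/2 = -(1/2) by ring, Real.rpow_neg hz.le, Real.sqrt_eq_rpow]
      exact (one_div _).symm
    have key : 1 / (2 * Real.sqrt (1 - t)) ≤ ((1 + x) ^ 2 - 4 * t) ^ (-(1:ℝ)/2) := by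
      rw [hzpow]
      have h2s : 2 * Real.sqrt (1 - t) = Real.sqrt (4 * (1 - t)) := by
        rw [show (4:ℝ) * (1-t) = 2^2 * (1-t) by ring, Real.sqrt_mul (by positivity),
          Real.sqrt_sq (by norm_num)]
      rw [h2s]
      apply one_div_le_one_div_of_le hsz
      exact Real.sqrt_le_sqrt (by nlinarith)
    have hrstar : rStar t = 1 / (2 * Real.sqrt (1 - t)) := by
      rw [rStar, Set.indicator_of_mem hmem]; simp
    constructor
    · rw [hrstar, phi]
      by_cases hxt : t < x
      · rw [Set.indicator_of_mem (show t ∈ Set.Ico (0:ℝ) x from ⟨ht0, hxt⟩),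
          Set.indicator_of_notMem
            (show t ∉ Set.Ico x (((1 + x) / 2) ^ 2) from fun hc => absurd hc.1 (not_le.2 hxt))]
        simpa using key
      · push_neg at hxt
        have hb : t < ((1 + x) / 2) ^ 2 := by nlinarith
        rw [Set.indicator_of_notMem
            (show t ∉ Set.Ico (0:ℝ) x from fun hc => absurd hc.2 (not_lt.2 hxt)),
          Set.indicator_of_mem (show t ∈ Set.Ico x (((1 + x) / 2) ^ 2) from ⟨hxt, hb⟩)]
        simp only [Pi.one_apply, mul_one, zero_add]
        nlinarith [Real.rpow_pos_of_pos hz (-(1:ℝ)/2), key]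
    · rw [hrstar, r, Set.indicator_of_mem hmem, Pi.one_apply, mul_one]
      have hle : Real.sqrt (1 - t) ≤ 1 := Real.sqrt_le_one.mpr (by linarith)
      rw [div_le_div_iff₀ (by norm_num) (by positivity)]
      nlinarith
  · push_neg at h
    have hnot : t ∉ Set.Ico (0:ℝ) (1/4) := fun hc => absurd hc.2 (not_lt.2 h)
    rw [rStar, r, Set.indicator_of_notMem hnot, mul_zero, mul_zero]
    refine ⟨?_, le_refl 0⟩
    rw [phi]
    apply mul_nonneg
    · rcases le_or_gt 0 ((1 + x) ^ 2 - 4 * t) with hz | hz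
      · exact Real.rpow_nonneg hz _
      · rw [Real.rpow_def_of_neg hz]
        have hc : Real.cos (-(1:ℝ)/2 * Real.pi) = 0 := by
          rw [show -(1:ℝ)/2 * Real.pi = -(Real.pi/2) by ring, Real.cos_neg,
            Real.cos_pi_div_two]
        rw [hc, mul_zero]
    · have i1 : (0:ℝ) ≤ Set.indicator (Set.Ico (0:ℝ) x) 1 t :=
        Set.indicator_nonneg (fun _ _ => zero_le_one) t
      have i2 : (0:ℝ) ≤ Set.indicator (Set.Ico x (((1 + x) / 2) ^ 2)) 1 t :=
        Set.indicator_nonneg (fun _ _ => zero_le_one) t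
      linarith
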